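/- Let x be a letter of a finite alphabet A, let s be a standard episturmian word over A \ {x}, and let p be a natural number. Then every factor of the infinite word s̃_p·x·s is finite episturmian, where s_p is the prefix of s of length p and s̃_p its reversal. -/

import Mathlib

/-- The prefix of length `k` of an infinite word `t`. -/
def prefixList {A : Type*} (t : ℕ → A) (k : ℕ) : List A := (List.range k).map t

/-- `u` occurs as a factor of the infinite word `t` at position `i`. -/
def FactorAt {A : Type*} (t : ℕ → A) (u : List A) (i : ℕ) : Prop :=
  u = (List.range u.length).map (fun j => t (i + j))

/-- `u` is a (finite) factor of the infinite word `t`. -/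
def IsFactorInf {A : Type*} (t : ℕ → A) (u : List A) : Prop := ∃ i, FactorAt t u i

/-- An infinite word is recurrent if each of its factors occurs infinitely often. -/
def Recurrent {A : Type*} (t : ℕ → A) : Prop :=
  ∀ u, IsFactorInf t u → ∀ N, ∃ i, N ≤ i ∧ FactorAt t u i

/-- `u` is a right special factor of `t`. -/
def RightSpecial {A : Type*} (t : ℕ → A) (u : List A) : Prop :=
  ∃ a b : A, a ≠ b ∧ IsFactorInf t (u ++ [a]) ∧ IsFactorInf t (u ++ [b])

/-- `u` is a left special factor of `t`. -/
def LeftSpecial {A : Type*} (t : ℕ → A) (u : List A) : Prop :=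
  ∃ a b : A, a ≠ b ∧ IsFactorInf t (a :: u) ∧ IsFactorInf t (b :: u)

/-- An infinite word is episturmian if its set of factors is closed under reversal
and it has at most one right special factor of each length. -/
def Episturmian {A : Type*} (t : ℕ → A) : Prop :=
  (∀ u, IsFactorInf t u → IsFactorInf t u.reverse) ∧
  (∀ u v, RightSpecial t u → RightSpecial t v → u.length = v.length → u = v)

/-- A standard episturmian word: episturmian with all left special factors prefixes. -/
def StdEpisturmian {A : Type*} (t : ℕ → A) : Prop :=
  Episturmian t ∧ ∀ u, LeftSpecial t u → u = prefixList t u.length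

/-- A finite word is finite episturmian if it is a factor of some episturmian infinite word. -/
def FiniteEpisturmian {A : Type*} (w : List A) : Prop :=
  ∃ t : ℕ → A, Episturmian t ∧ IsFactorInf t w

/-- An acceptable pair: a strict total order `r` on `A` together with a letter `a`
that is minimal for `r`. -/
def AcceptablePair {A : Type*} (r : A → A → Prop) (a : A) : Prop :=
  IsStrictTotalOrder A r ∧ ∀ b, b ≠ a → r a b

/-- Non-strict lexicographic order on finite words induced by the order `r` on letters. -/
def listLe {A : Type*} (r : A → A → Prop) (u v : List A) : Prop := u = v ∨ List.Lex r u v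

/-- Non-strict lexicographic order on infinite words induced by the order `r` on letters. -/
def infLe {A : Type*} (r : A → A → Prop) (x y : ℕ → A) : Prop :=
  x = y ∨ ∃ i, (∀ j, j < i → x j = y j) ∧ r (x i) (y i)

/-- `m` is the lexicographically smallest factor of the finite word `w` of length `k`. -/
def IsMinFacLen {A : Type*} (r : A → A → Prop) (w : List A) (k : ℕ) (m : List A) : Prop :=
  m <:+: w ∧ m.length = k ∧ ∀ u, u <:+: w → u.length = k → listLe r m u

/-- `m` is the lexicographically greatest factor of the finite word `w` of length `k`. -/
def IsMaxFacLen {A : Type*} (r : A → A → Prop) (w : List A) (k : ℕ) (m : List A) : Prop :=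
  m <:+: w ∧ m.length = k ∧ ∀ u, u <:+: w → u.length = k → listLe r u m

/-- `m = min(w)`: for each `j ≤ |m|` the prefix of `m` of length `j` is `min(w|j)`,
and `|m|` is maximal with this chain property. -/
def IsMinFin {A : Type*} (r : A → A → Prop) (w m : List A) : Prop :=
  m ≠ [] ∧
  (∀ j, j ≤ m.length → IsMinFacLen r w j (m.take j)) ∧
  (∀ m', IsMinFacLen r w (m.length + 1) m' → ¬ m <+: m')

/-- `m = max(w)` (finite word version). -/
def IsMaxFin {A : Type*} (r : A → A → Prop) (w m : List A) : Prop :=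
  m ≠ [] ∧
  (∀ j, j ≤ m.length → IsMaxFacLen r w j (m.take j)) ∧
  (∀ m', IsMaxFacLen r w (m.length + 1) m' → ¬ m <+: m')

/-- `m = min(t)` for an infinite word `t`: each prefix of `m` is the lexicographically
smallest factor of `t` of its length. -/
def IsMinInf {A : Type*} (r : A → A → Prop) (t m : ℕ → A) : Prop :=
  ∀ k, IsFactorInf t (prefixList m k) ∧
    ∀ u, IsFactorInf t u → u.length = k → listLe r (prefixList m k) u

/-- `m = max(t)` for an infinite word `t`. -/
def IsMaxInf {A : Type*} (r : A → A → Prop) (t m : ℕ → A) : Prop :=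
  ∀ k, IsFactorInf t (prefixList m k) ∧
    ∀ u, IsFactorInf t u → u.length = k → listLe r u (prefixList m k)

/-- Prepend a letter to an infinite word. -/
def consInf {A : Type*} (a : A) (t : ℕ → A) : ℕ → A
  | 0 => a
  | n + 1 => t n

/-- Prepend a finite word to an infinite word. -/
def wordAppend {A : Type*} (v : List A) (t : ℕ → A) : ℕ → A :=
  fun n => if h : n < v.length then v.get ⟨n, h⟩ else t (n - v.length)

/-- The pure epistandard morphism `ψ_z` on finite words: it fixes `z` and sends
each letter `x ≠ z` to `zx`. -/
def psiW {A : Type*} [DecidableEq A] (z : A) (w : List A) : List A :=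
  (w.map (fun x => if x = z then [z] else [z, x])).flatten

/-- The finite word `u` is a prefix of the infinite word `t`. -/
def IsPrefixInf {A : Type*} (u : List A) (t : ℕ → A) : Prop := u = prefixList t u.length

/-- `y = f(t)`: the infinite word `y` is the image of the infinite word `t` under the
(non-erasing) morphism `f`, acting letter by letter. -/
def IsMorphImage {A : Type*} (f : List A → List A) (t y : ℕ → A) : Prop :=
  ∀ k, IsPrefixInf (f (prefixList t k)) y

/-- Pure epistandard morphisms: finite compositions of the morphisms `ψ_a`. -/
inductive PureEpistandard {A : Type*} [DecidableEq A] : (List A → List A) → Prop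
  | id : PureEpistandard _root_.id
  | comp (a : A) (f : List A → List A) : PureEpistandard f →
      PureEpistandard (fun w => psiW a (f w))

/-- An infinite word is episkew if it is non-recurrent and all of its factors
are finite episturmian. -/
def Episkew {A : Type*} (t : ℕ → A) : Prop :=
  ¬ Recurrent t ∧ ∀ u, IsFactorInf t u → FiniteEpisturmian u

/- Two-letter (Bool) notions: `false` plays the role of `a`, `true` of `b`,
with the order `false < true`. -/

/-- A finite binary word is balanced. -/
def BalancedList (w : List Bool) : Prop :=
  ∀ u v : List Bool, u <:+: w → v <:+: w → u.length = v.length →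
    |(u.count true : ℤ) - (v.count true : ℤ)| ≤ 1

/-- An infinite binary word is balanced. -/
def BalancedInf (t : ℕ → Bool) : Prop :=
  ∀ u v : List Bool, IsFactorInf t u → IsFactorInf t v → u.length = v.length →
    |(u.count true : ℤ) - (v.count true : ℤ)| ≤ 1

/-- The Sturmian word of slope `α` and intercept `ρ` defined via floors. -/
def SturmianFloor (α ρ : ℝ) (t : ℕ → Bool) : Prop :=
  ∀ n : ℕ, t n = true ↔ ⌊((n : ℝ) + 1) * α + ρ⌋ ≠ ⌊(n : ℝ) * α + ρ⌋

/-- The Sturmian word of slope `α` and intercept `ρ` defined via ceilings. -/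
def SturmianCeil (α ρ : ℝ) (t : ℕ → Bool) : Prop :=
  ∀ n : ℕ, t n = true ↔ ⌈((n : ℝ) + 1) * α + ρ⌉ ≠ ⌈(n : ℝ) * α + ρ⌉

/-- Aperiodic Sturmian words: those of irrational slope. -/
def IsAperiodicSturmian (t : ℕ → Bool) : Prop :=
  ∃ α ρ : ℝ, α ∈ Set.Icc (0 : ℝ) 1 ∧ ρ ∈ Set.Icc (0 : ℝ) 1 ∧ Irrational α ∧
    (SturmianFloor α ρ t ∨ SturmianCeil α ρ t)

/-- Standard Sturmian words: those with `ρ = α`. -/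
def IsStandardSturmian (t : ℕ → Bool) : Prop :=
  ∃ α : ℝ, α ∈ Set.Icc (0 : ℝ) 1 ∧ (SturmianFloor α α t ∨ SturmianCeil α α t)

/-- A fine infinite binary word: `(min(t), max(t)) = (a·s, b·s)` for some infinite word `s`. -/
def FineBool (t : ℕ → Bool) : Prop :=
  ∃ s : ℕ → Bool, IsMinInf (· < ·) t (consInf false s) ∧ IsMaxInf (· < ·) t (consInf true s)

/-- A periodic infinite word. -/
def PeriodicInf {A : Type*} (t : ℕ → A) : Prop := ∃ p, 0 < p ∧ ∀ i, t (i + p) = t i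

/-- An ultimately periodic infinite word. -/
def UltPeriodicInf {A : Type*} (t : ℕ → A) : Prop :=
  ∃ p, 0 < p ∧ ∃ m, ∀ i, m ≤ i → t (i + p) = t i

/-!
Choose a palindromic prefix `s_M` of `s` with `M` large; standard episturmian words have
arbitrarily long ones. Since `s̃_p` is then a suffix of `s_M`, every occurrence of a factor of
`s̃_p x s` is also an occurrence in the periodic word `(s_M x)^ω`, and that word is episturmian.
Its factors are closed under reversal because its period is a palindrome followed by `x`. A right
special factor of it cannot contain `x`, since an `x` fixes the phase modulo `M + 1` and with it the
next letter; so it is either followed by `x`, hence a suffix of the palindrome `s_M`, or right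
special in `s`. Either way it is the reversal of the prefix of `s` of its length.
-/

namespace List

theorem exists_prefix_append_ne_of_ne {α : Type*} :
    ∀ {v w : List α}, v.length = w.length → v ≠ w →
      ∃ z a b, a ≠ b ∧ z ++ [a] <+: v ∧ z ++ [b] <+: w
  | [], [], _, hne => absurd rfl hne
  | a :: v, b :: w, hlen, hne => by
    by_cases hab : a = b
    · subst hab
      obtain ⟨z, c, d, hcd, hv, hw⟩ :=
        exists_prefix_append_ne_of_ne (Nat.succ_injective hlen) (fun h => hne (h ▸ rfl))
      exact ⟨a :: z, c, d, hcd, prefix_cons_inj a |>.2 hv, prefix_cons_inj a |>.2 hw⟩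
    · exact ⟨[], a, b, hab, by simp, by simp⟩

end List

section Factors

variable {A : Type*} {t : ℕ → A}

theorem factorAt_iff {u : List A} {i : ℕ} :
    FactorAt t u i ↔ ∀ j (hj : j < u.length), u[j] = t (i + j) := by
  constructor
  · intro h j hj
    rw [List.getElem_of_eq h hj]
    simp
  · intro h
    refine List.ext_getElem (by simp) fun n h1 _ => ?_
    simpa using h n h1

@[simp] theorem length_prefixList (t : ℕ → A) (k : ℕ) : (prefixList t k).length = k := by
  simp [prefixList]

@[simp] theorem getElem_prefixList (t : ℕ → A) (k j : ℕ) (h : j < (prefixList t k).length) :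
    (prefixList t k)[j] = t j := by
  simp [prefixList]

theorem factorAt_zero_iff {u : List A} : FactorAt t u 0 ↔ u = prefixList t u.length := by
  simp [FactorAt, prefixList]

theorem factorAt_prefixList_zero (t : ℕ → A) (k : ℕ) : FactorAt t (prefixList t k) 0 :=
  factorAt_zero_iff.2 (by rw [length_prefixList])

theorem prefixList_prefix_prefixList {k n : ℕ} (h : k ≤ n) :
    prefixList t k <+: prefixList t n := by
  obtain ⟨m, rfl⟩ := Nat.exists_eq_add_of_le h
  rw [prefixList, prefixList, List.range_add, List.map_append]
  exact List.prefix_append _ _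

theorem FactorAt.of_prefix {u v : List A} {i : ℕ} (h : FactorAt t v i) (huv : u <+: v) :
    FactorAt t u i := by
  rw [factorAt_iff] at h ⊢
  intro j hj
  rw [← h j (lt_of_lt_of_le hj huv.length_le), huv.getElem]

theorem FactorAt.shift {t' : ℕ → A} {u : List A} {i k : ℕ}
    (h : FactorAt t u i) (htt' : ∀ j < i + u.length, t j = t' (k + j)) :
    FactorAt t' u (k + i) := by
  rw [factorAt_iff] at h ⊢
  intro j hj
  rw [h j hj, htt' _ (by omega), Nat.add_assoc]

theorem factorAt_append_singleton_iff {u : List A} {c : A} {i : ℕ} :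
    FactorAt t (u ++ [c]) i ↔ FactorAt t u i ∧ t (i + u.length) = c := by
  simp only [factorAt_iff, List.length_append, List.length_singleton]
  constructor
  · intro h
    refine ⟨fun j hj => ?_, ?_⟩
    · rw [← h j (by omega), List.getElem_append_left hj]
    · simpa using (h u.length (by omega)).symm
  · rintro ⟨hu, hc⟩ j hj
    rcases Nat.lt_or_ge j u.length with hj' | hj'
    · rw [List.getElem_append_left hj', hu j hj']
    · obtain rfl : j = u.length := by omega
      simp [hc]

theorem prefixList_add_of_factorAt {w : List A} {i : ℕ} (h : FactorAt t w i) :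
    prefixList t (i + w.length) = prefixList t i ++ w := by
  rw [prefixList, List.range_add, List.map_append, List.map_map]
  exact congrArg _ h.symm

theorem eq_prefixList_of_prefix {u : List A} {n : ℕ} (h : u <+: prefixList t n) :
    u = prefixList t u.length := by
  rw [← factorAt_zero_iff]
  exact (factorAt_prefixList_zero t n).of_prefix h

theorem reverse_prefixList_eq_self_iff {M : ℕ} :
    (prefixList t M).reverse = prefixList t M ↔ ∀ j < M, t (M - 1 - j) = t j := by
  constructor
  · intro h j hj
    have := List.getElem_of_eq h (by simpa using hj)
    simpa using this
  · intro h
    refine List.ext_getElem (by simp) fun j h1 _ => ?_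
    simp only [List.length_reverse, length_prefixList] at h1
    simpa using h j h1

end Factors

section StdEpisturmian

variable {A : Type*} {s : ℕ → A}

theorem StdEpisturmian.eq_reverse_prefixList_of_rightSpecial (hs : StdEpisturmian s)
    {u : List A} (hu : RightSpecial s u) : u = (prefixList s u.length).reverse := by
  obtain ⟨a, b, hab, ha, hb⟩ := hu
  have hls : LeftSpecial s u.reverse := by
    refine ⟨a, b, hab, ?_, ?_⟩
    · simpa using hs.1.1 _ ha
    · simpa using hs.1.1 _ hb
  rw [← List.length_reverse, ← hs.2 _ hls, List.reverse_reverse]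

/-- The first letter where `s_{i+n}` and its reversal differ ends a right special prefix, which is
therefore a palindrome; choosing `i` so that `s̃_n` occurs at `i` makes it at least `n` long. -/
theorem StdEpisturmian.exists_reverse_prefixList_eq (hs : StdEpisturmian s) (n : ℕ) :
    ∃ M, n ≤ M ∧ (prefixList s M).reverse = prefixList s M := by
  obtain ⟨i, hi⟩ := hs.1.1 _ ⟨0, factorAt_prefixList_zero s n⟩
  set v := prefixList s (i + n)
  have hv : v = prefixList s i ++ (prefixList s n).reverse := by
    simpa using prefixList_add_of_factorAt hi
  by_cases hpal : v.reverse = v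
  · exact ⟨i + n, by omega, hpal⟩
  obtain ⟨z, a, b, hab, hza, hzb⟩ := List.exists_prefix_append_ne_of_ne (by simp) hpal
  have hz : z = prefixList s z.length :=
    eq_prefixList_of_prefix ((List.prefix_append z [b]).trans hzb)
  have hrs : RightSpecial s z := by
    obtain ⟨k, hk⟩ := hs.1.1 v ⟨0, factorAt_prefixList_zero s _⟩
    exact ⟨a, b, hab, ⟨k, hk.of_prefix hza⟩,
      ⟨0, factorAt_zero_iff.2 (eq_prefixList_of_prefix hzb)⟩⟩
  have hzn : n ≤ z.length := by
    by_contra! hlt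
    have hsn : prefixList s n <+: v.reverse := by simp [hv]
    have hsn' : prefixList s n <+: v := prefixList_prefix_prefixList (by omega)
    have ha := List.prefix_of_prefix_length_le hza hsn (by simp; omega)
    have hb := List.prefix_of_prefix_length_le hzb hsn' (by simp; omega)
    have hzab := (List.prefix_of_prefix_length_le ha hb (by simp)).eq_of_length (by simp)
    exact hab (by simpa using hzab)
  refine ⟨z.length, hzn, ?_⟩
  have hzrev := hs.eq_reverse_prefixList_of_rightSpecial hrs
  rw [← hz] at hzrev ⊢
  exact hzrev.symm

end StdEpisturmian

/-- The infinite word `(s_M x)^ω`. -/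
def periodicWord {A : Type*} (s : ℕ → A) (x : A) (M : ℕ) : ℕ → A :=
  fun i => if i % (M + 1) = M then x else s (i % (M + 1))

namespace periodicWord

variable {A : Type*} {s : ℕ → A} {x : A} {M : ℕ}

theorem eq_x_iff (hx : ∀ n, s n ≠ x) {a : ℕ} :
    periodicWord s x M a = x ↔ a % (M + 1) = M := by
  unfold periodicWord
  split_ifs with h
  · simp [h]
  · simp [h, hx]

theorem eq_of_mod_lt {a : ℕ} (h : a % (M + 1) < M) :
    periodicWord s x M a = s (a % (M + 1)) := by
  simp [periodicWord, h.ne]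

theorem congr_mod {a b : ℕ} (h : a ≡ b [MOD M + 1]) :
    periodicWord s x M a = periodicWord s x M b := by
  simp only [periodicWord, show a % (M + 1) = b % (M + 1) from h]

theorem eq_of_add_add_two_mod_eq_zero (hpal : ∀ j < M, s (M - 1 - j) = s j) {a b : ℕ}
    (h : (a + b + 2) % (M + 1) = 0) : periodicWord s x M a = periodicWord s x M b := by
  rw [congr_mod (Nat.mod_modEq a (M + 1)).symm, congr_mod (Nat.mod_modEq b (M + 1)).symm]
  have hdvd : M + 1 ∣ a % (M + 1) + b % (M + 1) + 2 :=
    Nat.dvd_of_mod_eq_zero (h ▸ ((Nat.mod_modEq a _).add (Nat.mod_modEq b _)).add_right 2)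
  have ha := Nat.mod_lt a (show 0 < M + 1 by omega)
  have hb := Nat.mod_lt b (show 0 < M + 1 by omega)
  generalize a % (M + 1) = ra at *
  generalize b % (M + 1) = rb at *
  obtain ⟨q, hq⟩ := hdvd
  have hq2 : q ≤ 2 := Nat.le_of_mul_le_mul_left (by omega) (show 0 < M + 1 by omega)
  interval_cases q
  · omega
  · obtain rfl : rb = M - 1 - ra := by omega
    rw [periodicWord, periodicWord, Nat.mod_eq_of_lt ha, Nat.mod_eq_of_lt hb, if_neg (by omega),
      if_neg (by omega), hpal ra (by omega)]
  · simp [show ra = M by omega, show rb = M by omega]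

theorem isFactorInf_reverse (hpal : ∀ j < M, s (M - 1 - j) = s j) {u : List A}
    (h : IsFactorInf (periodicWord s x M) u) : IsFactorInf (periodicWord s x M) u.reverse := by
  obtain ⟨i, hi⟩ := h
  -- the mirror image of position `a` is `-2 - a` modulo `M + 1`
  refine ⟨M * (i + u.length + 1), factorAt_iff.2 fun j hj => ?_⟩
  rw [List.length_reverse] at hj
  rw [List.getElem_reverse, factorAt_iff.1 hi _ (by omega)]
  apply eq_of_add_add_two_mod_eq_zero hpal
  rw [show i + (u.length - 1 - j) + (M * (i + u.length + 1) + j) + 2 =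
      (M + 1) * (i + u.length + 1) by rw [add_mul, one_mul]; omega]
  exact Nat.mul_mod_right _ _

theorem factorAt_of_not_mem (hx : ∀ n, s n ≠ x) {w : List A} {i : ℕ}
    (h : FactorAt (periodicWord s x M) w i) (hxw : x ∉ w) :
    i % (M + 1) + w.length ≤ M ∧ FactorAt s w (i % (M + 1)) := by
  rw [factorAt_iff] at h
  have hlt := Nat.mod_lt i (show 0 < M + 1 by omega)
  have hmod : ∀ j, i % (M + 1) + j < M + 1 → (i + j) % (M + 1) = i % (M + 1) + j :=
    fun j hj => by rw [← Nat.mod_add_mod, Nat.mod_eq_of_lt hj]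
  have hle : i % (M + 1) + w.length ≤ M := by
    by_contra! hlt
    have hj : M - i % (M + 1) < w.length := by omega
    refine hxw (List.mem_iff_getElem.2 ⟨_, hj, ?_⟩)
    rw [h _ hj, eq_x_iff hx, hmod _ (by omega)]
    omega
  refine ⟨hle, factorAt_iff.2 fun j hj => ?_⟩
  have hij := hmod j (by omega)
  rw [h j hj, eq_of_mod_lt (by omega), hij]

theorem eq_reverse_prefixList_of_factorAt_append_x (hx : ∀ n, s n ≠ x)
    (hpal : ∀ j < M, s (M - 1 - j) = s j) {u : List A} {i : ℕ}
    (h : FactorAt (periodicWord s x M) (u ++ [x]) i) (hxu : x ∉ u) :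
    u = (prefixList s u.length).reverse := by
  obtain ⟨hu, hend⟩ := factorAt_append_singleton_iff.1 h
  obtain ⟨hle, hu⟩ := factorAt_of_not_mem hx hu hxu
  rw [eq_x_iff hx, ← Nat.mod_add_mod, Nat.mod_eq_of_lt (by omega)] at hend
  rw [show i % (M + 1) = M - u.length by omega] at hu
  refine List.ext_getElem (by simp) fun j hj _ => ?_
  rw [factorAt_iff.1 hu j hj, List.getElem_reverse, getElem_prefixList, length_prefixList,
    ← hpal _ (by omega)]
  congr 1
  omega

theorem not_mem_of_rightSpecial (hx : ∀ n, s n ≠ x) {u : List A}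
    (hu : RightSpecial (periodicWord s x M) u) : x ∉ u := by
  obtain ⟨c, d, hcd, ⟨i, hi⟩, ⟨i', hi'⟩⟩ := hu
  rw [factorAt_append_singleton_iff] at hi hi'
  intro hxu
  obtain ⟨q, hq, hxq⟩ := List.getElem_of_mem hxu
  have hphase : ∀ {k}, FactorAt (periodicWord s x M) u k → (k + q) % (M + 1) = M := fun hk => by
    rw [← eq_x_iff hx, ← factorAt_iff.1 hk q hq, hxq]
  have hii' : i ≡ i' [MOD M + 1] := Nat.ModEq.add_right_cancel' q
    ((hphase hi.1).trans (hphase hi'.1).symm)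
  exact hcd (hi.2 ▸ hi'.2 ▸ congr_mod (hii'.add_right _))

theorem eq_reverse_prefixList_of_rightSpecial (hs : StdEpisturmian s) (hx : ∀ n, s n ≠ x)
    (hpal : ∀ j < M, s (M - 1 - j) = s j) {u : List A}
    (hu : RightSpecial (periodicWord s x M) u) : u = (prefixList s u.length).reverse := by
  have hxu := not_mem_of_rightSpecial hx hu
  obtain ⟨c, d, hcd, ⟨i, hi⟩, ⟨i', hi'⟩⟩ := hu
  by_cases hc : c = x
  · exact eq_reverse_prefixList_of_factorAt_append_x hx hpal (hc ▸ hi) hxu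
  by_cases hd : d = x
  · exact eq_reverse_prefixList_of_factorAt_append_x hx hpal (hd ▸ hi') hxu
  exact hs.eq_reverse_prefixList_of_rightSpecial ⟨c, d, hcd,
    ⟨_, (factorAt_of_not_mem hx hi (by simp [hxu, Ne.symm hc])).2⟩,
    ⟨_, (factorAt_of_not_mem hx hi' (by simp [hxu, Ne.symm hd])).2⟩⟩

theorem episturmian (hs : StdEpisturmian s) (hx : ∀ n, s n ≠ x)
    (hpal : ∀ j < M, s (M - 1 - j) = s j) : Episturmian (periodicWord s x M) := by
  refine ⟨fun u hu => isFactorInf_reverse hpal hu, fun u v hu hv hlen => ?_⟩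
  rw [eq_reverse_prefixList_of_rightSpecial hs hx hpal hu,
    eq_reverse_prefixList_of_rightSpecial hs hx hpal hv, hlen]

end periodicWord

theorem wordAppend_eq_periodicWord {A : Type*} {s : ℕ → A} {x : A} {p M j : ℕ}
    (hpal : ∀ j < M, s (M - 1 - j) = s j) (hpM : p ≤ M) (hj : j < p + 1 + M) :
    wordAppend ((prefixList s p).reverse ++ [x]) s j = periodicWord s x M (M - p + j) := by
  simp only [wordAppend, List.length_append, List.length_reverse, length_prefixList,
    List.length_singleton, List.get_eq_getElem]
  rcases Nat.lt_trichotomy j p with hjp | rfl | hjp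
  · rw [periodicWord.eq_of_mod_lt (by rw [Nat.mod_eq_of_lt (by omega)]; omega),
      Nat.mod_eq_of_lt (by omega), dif_pos (by omega), List.getElem_append_left (by simpa),
      List.getElem_reverse, getElem_prefixList, length_prefixList, ← hpal _ (by omega)]
    congr 1
    omega
  · simp [periodicWord, show M - j + j = M by omega]
  · have hmod : (M - p + j) % (M + 1) = j - (p + 1) := by
      rw [show M - p + j = j - (p + 1) + (M + 1) by omega, Nat.add_mod_right,
        Nat.mod_eq_of_lt (by omega)]
    rw [dif_neg (by omega), periodicWord.eq_of_mod_lt (by omega), hmod]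

theorem factors_of_skew_form_episturmian_general {A : Type*} (x : A) (s : ℕ → A)
    (hs : StdEpisturmian s) (hx : ∀ n, s n ≠ x) (p : ℕ) :
    ∀ u, IsFactorInf (wordAppend ((prefixList s p).reverse ++ [x]) s) u →
      FiniteEpisturmian u := by
  rintro u ⟨i, hi⟩
  obtain ⟨M, hM, hpal⟩ := hs.exists_reverse_prefixList_eq (p + i + u.length)
  rw [reverse_prefixList_eq_self_iff] at hpal
  exact ⟨periodicWord s x M, periodicWord.episturmian hs hx hpal, _,
    hi.shift fun j hj => wordAppend_eq_periodicWord hpal (by omega) (by omega)⟩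

/-- If `x` is a letter, `s` a standard episturmian word over `A \ {x}`, and
`p ∈ ℕ`, then every factor of the infinite word `s̃_p·x·s` is finite episturmian. -/
theorem factors_of_skew_form_episturmian {A : Type*} [Fintype A] (x : A) (s : ℕ → A)
    (hs : StdEpisturmian s) (hx : ∀ n, s n ≠ x) (p : ℕ) :
    ∀ u, IsFactorInf (wordAppend ((prefixList s p).reverse ++ [x]) s) u →
      FiniteEpisturmian u :=
  factors_of_skew_form_episturmian_general x s hs hx p
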